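/- arXiv:1409.8460 — 2 statements merged into one kernel-verified Lean document; each statement's English description precedes it below -/
import Mathlib

section
/- Let 𝒵 be a family of non-empty subsets of M with C^T(Z) ∩ C^T(Z') = ∅ for all distinct Z, Z' ∈ 𝒵 (which forces the sets Z to be pairwise disjoint, since Z ⊆ C^T(Z)), and let A = ⋃_{Z ∈ 𝒵} Z. Then the interference set decomposes as T(A) = ⋃_{Z ∈ 𝒵} T(Z), and the sets T(Z), Z ∈ 𝒵, are pairwise disjoint. -/
open Finset

variable {V : Type*} [Fintype V] [DecidableEq V]

/-- The interference set `T(X)`: devices not in `X` hearing at least two transmitters. -/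
def interf (C : V → Finset V) (X : Finset V) : Finset V :=
  Finset.univ.filter fun i =>
    i ∉ X ∧ ∃ m ∈ X, ∃ n ∈ X, m ≠ n ∧ i ∈ C m ∧ i ∈ C n

/-- The total coverage zone `C^T(X) = ⋃_{x ∈ X} C_x`. -/
def totCov (C : V → Finset V) (X : Finset V) : Finset V := X.biUnion C

theorem stmt10 (C : V → Finset V) (hC : ∀ i, i ∈ C i)
    (Zc : Finset (Finset V)) (hne : ∀ Z ∈ Zc, Z.Nonempty)
    (hdisj : ∀ Z ∈ Zc, ∀ Z' ∈ Zc, Z ≠ Z' → Disjoint (totCov C Z) (totCov C Z')) :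
    interf C (Zc.biUnion id) = Zc.biUnion (fun Z => interf C Z) ∧
    ∀ Z ∈ Zc, ∀ Z' ∈ Zc, Z ≠ Z' → Disjoint (interf C Z) (interf C Z') := by
  have hsub : ∀ Z, interf C Z ⊆ totCov C Z := by
    intro Z i hi
    simp only [interf, mem_filter] at hi
    obtain ⟨-, -, m, hm, n, hn, hmn, him, hin⟩ := hi
    exact mem_biUnion.2 ⟨m, hm, him⟩
  constructor
  · ext i
    simp only [interf, totCov, mem_filter, mem_biUnion, id, mem_univ, true_and]
    constructor
    · rintro ⟨hiA, m, ⟨Z₁, hZ₁, hmZ₁⟩, n, ⟨Z₂, hZ₂, hnZ₂⟩, hmn, him, hin⟩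
      have hZeq : Z₁ = Z₂ := by
        by_contra h
        exact (Finset.disjoint_left.1 (hdisj Z₁ hZ₁ Z₂ hZ₂ h))
          (mem_biUnion.2 ⟨m, hmZ₁, him⟩) (mem_biUnion.2 ⟨n, hnZ₂, hin⟩)
      subst hZeq
      exact ⟨Z₁, hZ₁, fun h => hiA ⟨Z₁, hZ₁, h⟩, m, hmZ₁, n, hnZ₂, hmn, him, hin⟩
    · rintro ⟨Z, hZ, hiZ, m, hmZ, n, hnZ, hmn, him, hin⟩
      refine ⟨?_, m, ⟨Z, hZ, hmZ⟩, n, ⟨Z, hZ, hnZ⟩, hmn, him, hin⟩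
      rintro ⟨Z', hZ', hiZ'⟩
      by_cases h : Z' = Z
      · exact hiZ (h ▸ hiZ')
      · exact (Finset.disjoint_left.1 (hdisj Z' hZ' Z hZ h))
          (mem_biUnion.2 ⟨i, hiZ', hC i⟩) (mem_biUnion.2 ⟨m, hmZ, him⟩)
  · intro Z hZ Z' hZ' hne'
    exact ((hdisj Z hZ Z' hZ' hne').mono (hsub Z) (hsub Z'))
end

section
/- For each cluster Z ∈ 𝐙, each i ∈ Z and each κ ⊆ H_i, let τ_i^Z(κ) = {j ∈ C_i \ (Z ∪ T(Z)) : |κ ∩ W_j| = 1}, let y(Z) = Σ_{i ∈ Z} max_{κ ⊆ H_i} Σ_{j ∈ τ_i^Z(κ)} (1 − p_{ij}), and give vertex Z the weight w(Z) = |C^T(Z) ∩ M_w| − |Z ∩ M_w| − |T(Z) ∩ M_w| + y(Z). Then the optimum of the joint decoding-delay problem, max over A ⊆ M and families (κ_i ⊆ H_i)_{i ∈ A} of [ −|A ∩ M_w| − |T(A) ∩ M_w| − |S(A) ∩ M_w| + Σ_{i ∈ A} Σ_{j ∈ τ_i(κ_i, A)} (1 − p_{ij}) ] with τ_i(κ,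 A) = {j ∈ O_i(A) : |κ ∩ W_j| = 1}, equals −|M_w| plus the maximum of Σ_{Z ∈ 𝒵} w(Z) over all cliques 𝒵 of the full cooperation graph; moreover, A* attains the former maximum (for some choice of κ) if and only if the unique clique 𝒵* with ⋃_{Z ∈ 𝒵*} Z = A* attains the latter maximum. -/
open Finset

variable {V P : Type*} [Fintype V] [DecidableEq V] [Fintype P] [DecidableEq P]

/-- The out-of-range set `S(A)`: devices heard by no transmitter. -/
def outRange (C : V → Finset V) (A : Finset V) : Finset V :=
  Finset.univ.filter fun i => ∀ j ∈ A, i ∉ C j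

/-- The opportunity zone `O_i(A) = C_i \ (A ∪ T(A))`. -/
def oppZone (C : V → Finset V) (A : Finset V) (i : V) : Finset V :=
  C i \ (A ∪ interf C A)

/-- `Z ∈ 𝐙`: a cluster is a non-empty set every non-empty proper subset of which
interferes with its complement in the cluster. -/
def IsCluster (C : V → Finset V) (Z : Finset V) : Prop :=
  Z.Nonempty ∧ ∀ z ⊆ Z, z.Nonempty → z ≠ Z →
    (totCov C z ∩ totCov C (Z \ z)).Nonempty

/-- The full cooperation graph: distinct clusters are adjacent iff their total
coverage zones are disjoint. -/
def fullCoopGraph (C : V → Finset V) : SimpleGraph {Z : Finset V // IsCluster C Z} :=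
  SimpleGraph.fromRel fun Z Z' => Disjoint (totCov C Z.1) (totCov C Z'.1)

/-- The Wants set `W_k = N \ H_k`. -/
def wants (H : V → Finset P) (k : V) : Finset P := (H k)ᶜ

/-- `M_w`: devices with a non-empty Wants set. -/
def Mwants (H : V → Finset P) : Finset V :=
  Finset.univ.filter fun k => wants H k ≠ ∅

/-- `τ_i(κ, A) = {j ∈ O_i(A) : |κ ∩ W_j| = 1}`. -/
def targeted (C : V → Finset V) (A : Finset V) (H : V → Finset P) (i : V)
    (κ : Finset P) : Finset V :=
  (oppZone C A i).filter fun j => (κ ∩ wants H j).card = 1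

/-- `τ_i^Z(κ) = {j ∈ C_i \ (Z ∪ T(Z)) : |κ ∩ W_j| = 1}`. -/
def tauZ (C : V → Finset V) (H : V → Finset P) (Z : Finset V) (i : V)
    (κ : Finset P) : Finset V :=
  (C i \ (Z ∪ interf C Z)).filter fun j => (κ ∩ wants H j).card = 1

/-- `y(Z) = Σ_{i ∈ Z} max_{κ ⊆ H_i} Σ_{j ∈ τ_i^Z(κ)} (1 − p_{ij})`. -/
noncomputable def yClust (C : V → Finset V) (H : V → Finset P) (p : V → V → ℝ)
    (Z : Finset V) : ℝ :=
  ∑ i ∈ Z, sSup {x : ℝ | ∃ κ ⊆ H i, x = ∑ j ∈ tauZ C H Z i κ, (1 - p i j)}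

/-- The weight of the vertex associated with the cluster `Z`. -/
noncomputable def wClust (C : V → Finset V) (H : V → Finset P) (p : V → V → ℝ)
    (Z : Finset V) : ℝ :=
  ((totCov C Z ∩ Mwants H).card : ℝ) - ((Z ∩ Mwants H).card : ℝ)
    - ((interf C Z ∩ Mwants H).card : ℝ) + yClust C H p Z

/-- The objective of the joint decoding-delay problem. -/
def jointObj (C : V → Finset V) (H : V → Finset P) (p : V → V → ℝ)
    (A : Finset V) (κ : V → Finset P) : ℝ :=
  -((A ∩ Mwants H).card : ℝ) - ((interf C A ∩ Mwants H).card : ℝ)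
    - ((outRange C A ∩ Mwants H).card : ℝ)
    + ∑ i ∈ A, ∑ j ∈ targeted C A H i (κ i), (1 - p i j)

/-!
For a fixed transmitting set `A` the objective is separable in the packet choices, so its
optimum over `κ` is reached device by device. Call `Z ⊆ A` separated in `A` if no device is
covered both by `Z` and by `A \ Z`; inside `C^T(Z)` the transmitters, the interference and the
opportunity zones of `A` are then those of `Z`. The clusters of a clique are separated in its
union, and every `A` is such a union, because a minimal separated part of `A` is a cluster.
Splitting the counts of the objective over the disjoint zones `C^T(Z)` (the out-of-range
devices being the complement of their union) shows that the optimised objective of `A` is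
`-|M_w| + Σ_Z w(Z)`.
-/

lemma Set.isGreatest_csSup_setOf_exists {α β : Type*} [Finite α]
    [ConditionallyCompleteLinearOrder β] {q : α → Prop} (f : α → β) (h : ∃ a, q a) :
    IsGreatest {x | ∃ a, q a ∧ x = f a} (sSup {x | ∃ a, q a ∧ x = f a}) := by
  have hfin : {x | ∃ a, q a ∧ x = f a}.Finite :=
    (Set.finite_range f).subset fun x ⟨a, _, hx⟩ => ⟨a, hx.symm⟩
  obtain ⟨a, ha⟩ := h
  exact ⟨Set.Nonempty.csSup_mem ⟨f a, a, ha, rfl⟩ hfin, fun _ hx => le_csSup hfin.bddAbove hx⟩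

lemma Finset.card_eq_sum_card_inter {ι α : Type*} [DecidableEq α] {s : Finset ι}
    {f : ι → Finset α} (hf : (s : Set ι).PairwiseDisjoint f) {X : Finset α}
    (hX : X ⊆ s.biUnion f) : #X = ∑ a ∈ s, #(X ∩ f a) := by
  rw [← card_biUnion (hf.mono_on fun _ _ => inter_subset_right), ← inter_biUnion,
    inter_eq_left.2 hX]

section Coverage

variable {α : Type*} [DecidableEq α] {C : α → Finset α}

lemma mem_totCov {X : Finset α} {j : α} : j ∈ totCov C X ↔ ∃ x ∈ X, j ∈ C x := mem_biUnion

lemma totCov_mono {X Y : Finset α} (h : X ⊆ Y) : totCov C X ⊆ totCov C Y :=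
  biUnion_subset_biUnion_of_subset_left _ h

lemma totCov_union (X Y : Finset α) : totCov C (X ∪ Y) = totCov C X ∪ totCov C Y :=
  union_biUnion

lemma subset_totCov (hC : ∀ i, i ∈ C i) (X : Finset α) : X ⊆ totCov C X :=
  fun x hx => mem_totCov.2 ⟨x, hx, hC x⟩

lemma disjoint_totCov_sdiff_trans {A Z S : Finset α}
    (hZ : Disjoint (totCov C Z) (totCov C (A \ Z))) (hSZ : S ⊆ Z)
    (hS : Disjoint (totCov C S) (totCov C (Z \ S))) :
    Disjoint (totCov C S) (totCov C (A \ S)) := by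
  have hsplit : A \ S ⊆ (Z \ S) ∪ (A \ Z) := by
    intro x; simp only [mem_sdiff, mem_union]; tauto
  refine (disjoint_of_subset_right (totCov_mono hsplit) ?_)
  rw [totCov_union]
  exact disjoint_union_right.2 ⟨hS, hZ.mono_left (totCov_mono hSZ)⟩

lemma mem_of_mem_totCov_of_separated {A Z : Finset α}
    (hsep : Disjoint (totCov C Z) (totCov C (A \ Z))) {m j : α} (hm : m ∈ A)
    (hj : j ∈ totCov C Z) (hjm : j ∈ C m) : m ∈ Z := by
  by_contra hmZ
  exact disjoint_left.1 hsep hj (mem_totCov.2 ⟨m, mem_sdiff.2 ⟨hm, hmZ⟩, hjm⟩)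

lemma inter_totCov_of_separated (hC : ∀ i, i ∈ C i) {A Z : Finset α} (hZA : Z ⊆ A)
    (hsep : Disjoint (totCov C Z) (totCov C (A \ Z))) : A ∩ totCov C Z = Z := by
  ext x
  simp only [mem_inter]
  exact ⟨fun ⟨hx, hxZ⟩ => mem_of_mem_totCov_of_separated hsep hx hxZ (hC x),
    fun hx => ⟨hZA hx, subset_totCov hC Z hx⟩⟩

lemma totCov_biUnion_val (Zc : Finset {Z : Finset α // IsCluster C Z}) :
    totCov C (Zc.biUnion Subtype.val) = Zc.biUnion fun Z => totCov C Z.1 :=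
  biUnion_biUnion _ _ _

lemma pairwiseDisjoint_totCov_of_isClique {Zc : Finset {Z : Finset α // IsCluster C Z}}
    (hclq : (fullCoopGraph C).IsClique ↑Zc) :
    (Zc : Set {Z : Finset α // IsCluster C Z}).PairwiseDisjoint fun Z => totCov C Z.1 := by
  intro Z hZ W hW hne
  obtain ⟨-, h | h⟩ := (SimpleGraph.fromRel_adj _ _ _).1 (hclq hZ hW hne)
  exacts [h, h.symm]

lemma pairwiseDisjoint_val_of_isClique (hC : ∀ i, i ∈ C i)
    {Zc : Finset {Z : Finset α // IsCluster C Z}}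
    (hclq : (fullCoopGraph C).IsClique ↑Zc) :
    (Zc : Set {Z : Finset α // IsCluster C Z}).PairwiseDisjoint Subtype.val :=
  (pairwiseDisjoint_totCov_of_isClique hclq).mono_on fun Z _ => subset_totCov hC Z.1

lemma separated_of_mem_isClique {Zc : Finset {Z : Finset α // IsCluster C Z}}
    (hclq : (fullCoopGraph C).IsClique ↑Zc) {Z : {Z : Finset α // IsCluster C Z}}
    (hZ : Z ∈ Zc) : Disjoint (totCov C Z.1) (totCov C (Zc.biUnion Subtype.val \ Z.1)) := by
  refine disjoint_right.2 fun j hj => ?_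
  obtain ⟨m, hm, hjm⟩ := mem_totCov.1 hj
  obtain ⟨hmA, hmZ⟩ := mem_sdiff.1 hm
  obtain ⟨W, hW, hmW⟩ := mem_biUnion.1 hmA
  have hWZ : W ≠ Z := by rintro rfl; exact hmZ hmW
  exact disjoint_left.1 (pairwiseDisjoint_totCov_of_isClique hclq hW hZ hWZ)
    (mem_totCov.2 ⟨m, hmW, hjm⟩)

lemma isCluster_of_minimal {A Z : Finset α} {a : α}
    (hZ : Minimal (fun S => a ∈ S ∧ S ⊆ A ∧ Disjoint (totCov C S) (totCov C (A \ S))) Z) :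
    IsCluster C Z := by
  obtain ⟨⟨haZ, hZA, hsep⟩, hmin⟩ := hZ
  have hpiece : ∀ S ⊆ Z, a ∈ S → Disjoint (totCov C S) (totCov C (Z \ S)) → S = Z :=
    fun S hSZ haS hS => hSZ.antisymm <|
      hmin ⟨haS, hSZ.trans hZA, disjoint_totCov_sdiff_trans hsep hSZ hS⟩ hSZ
  refine ⟨⟨a, haZ⟩, fun z hzZ hz hzZ' => not_disjoint_iff_nonempty_inter.1 fun hdisj => ?_⟩
  by_cases haz : a ∈ z
  · exact hzZ' (hpiece z hzZ haz hdisj)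
  · have hrest := hpiece (Z \ z) sdiff_subset (mem_sdiff.2 ⟨haZ, haz⟩)
      (by rwa [Finset.sdiff_sdiff_eq_self hzZ, disjoint_comm])
    obtain ⟨x, hx⟩ := hz
    exact (mem_sdiff.1 (hrest.symm ▸ hzZ hx)).2 hx

lemma exists_isClique_biUnion_eq (C : α → Finset α) (A : Finset α) :
    ∃ Zc : Finset {Z : Finset α // IsCluster C Z},
      (fullCoopGraph C).IsClique ↑Zc ∧ Zc.biUnion Subtype.val = A := by
  induction A using Finset.strongInduction with
  | H A ih =>
  rcases A.eq_empty_or_nonempty with rfl | ⟨a, ha⟩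
  · exact ⟨∅, by simp, by simp⟩
  obtain ⟨Z, -, hZmin⟩ := exists_minimal_le_of_wellFoundedLT
    (fun S => a ∈ S ∧ S ⊆ A ∧ Disjoint (totCov C S) (totCov C (A \ S))) A
    ⟨ha, subset_rfl, by simp [totCov]⟩
  obtain ⟨haZ, hZA, hsep⟩ := hZmin.prop
  obtain ⟨Zc, hclq, hZc⟩ := ih (A \ Z) (sdiff_ssubset hZA ⟨a, haZ⟩)
  refine ⟨insert ⟨Z, isCluster_of_minimal hZmin⟩ Zc, ?_, ?_⟩
  · rw [coe_insert, SimpleGraph.isClique_insert]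
    refine ⟨hclq, fun W hW _ => ?_⟩
    have hWA : W.1 ⊆ A \ Z := hZc ▸ subset_biUnion_of_mem Subtype.val hW
    refine (SimpleGraph.fromRel_adj _ _ _).2 ⟨?_, Or.inl (hsep.mono_right (totCov_mono hWA))⟩
    rintro rfl
    exact (mem_sdiff.1 (hWA haZ)).2 haZ
  · rw [biUnion_insert, hZc, union_sdiff_of_subset hZA]


end Coverage

section Interference

variable {C : V → Finset V}

lemma interf_subset_totCov (X : Finset V) : interf C X ⊆ totCov C X := by
  intro i hi
  obtain ⟨-, -, m, hm, -, -, -, him, -⟩ := mem_filter.1 hi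
  exact mem_totCov.2 ⟨m, hm, him⟩

lemma outRange_eq_compl_totCov (A : Finset V) : outRange C A = (totCov C A)ᶜ := by
  ext i
  simp [outRange, mem_totCov]

lemma interf_inter_totCov_of_separated (hC : ∀ i, i ∈ C i) {A Z : Finset V} (hZA : Z ⊆ A)
    (hsep : Disjoint (totCov C Z) (totCov C (A \ Z))) :
    interf C A ∩ totCov C Z = interf C Z := by
  ext i
  simp only [mem_inter, interf, mem_filter, mem_univ, true_and]
  constructor
  · rintro ⟨⟨hiA, m, hm, n, hn, hmn, him, hin⟩, hiZ⟩
    exact ⟨fun h => hiA (hZA h), m, mem_of_mem_totCov_of_separated hsep hm hiZ him,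
      n, mem_of_mem_totCov_of_separated hsep hn hiZ hin, hmn, him, hin⟩
  · rintro ⟨hiZ, m, hm, n, hn, hmn, him, hin⟩
    have hiCov : i ∈ totCov C Z := mem_totCov.2 ⟨m, hm, him⟩
    exact ⟨⟨fun hiA => hiZ (mem_of_mem_totCov_of_separated hsep hiA hiCov (hC i)),
      m, hZA hm, n, hZA hn, hmn, him, hin⟩, hiCov⟩

lemma targeted_eq_tauZ_of_separated (hC : ∀ i, i ∈ C i) {A Z : Finset V} (hZA : Z ⊆ A)
    (hsep : Disjoint (totCov C Z) (totCov C (A \ Z))) (H : V → Finset P) {i : V}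
    (hi : i ∈ Z) (κ : Finset P) : targeted C A H i κ = tauZ C H Z i κ := by
  have hCi : C i ⊆ totCov C Z := fun j hj => mem_totCov.2 ⟨i, hi, hj⟩
  have hopp : C i \ (A ∪ interf C A) = C i \ (Z ∪ interf C Z) := by
    ext j
    simp only [mem_sdiff, mem_union, and_congr_right_iff]
    intro hj
    have hA := Finset.ext_iff.1 (inter_totCov_of_separated hC hZA hsep) j
    have hT := Finset.ext_iff.1 (interf_inter_totCov_of_separated hC hZA hsep) j
    simp only [mem_inter, hCi hj, and_true] at hA hT
    rw [hA, hT]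
  rw [targeted, oppZone, hopp, tauZ]

end Interference

section Objective

variable {C : V → Finset V}

lemma wantCounts_biUnion (hC : ∀ i, i ∈ C i) {Zc : Finset {Z : Finset V // IsCluster C Z}}
    (hclq : (fullCoopGraph C).IsClique ↑Zc) (H : V → Finset P) :
    -((Zc.biUnion Subtype.val ∩ Mwants H).card : ℝ)
        - ((interf C (Zc.biUnion Subtype.val) ∩ Mwants H).card : ℝ)
        - ((outRange C (Zc.biUnion Subtype.val) ∩ Mwants H).card : ℝ)
      = -((Mwants H).card : ℝ) + ∑ Z ∈ Zc, (((totCov C Z.1 ∩ Mwants H).card : ℝ)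
          - ((Z.1 ∩ Mwants H).card : ℝ) - ((interf C Z.1 ∩ Mwants H).card : ℝ)) := by
  set A := Zc.biUnion Subtype.val
  have hsplit : ∀ X ⊆ totCov C A, #X = ∑ Z ∈ Zc, #(X ∩ totCov C Z.1) := fun X hX =>
    card_eq_sum_card_inter (pairwiseDisjoint_totCov_of_isClique hclq)
      (totCov_biUnion_val Zc ▸ hX)
  have hZA : ∀ Z ∈ Zc, Z.1 ⊆ A := fun Z hZ => subset_biUnion_of_mem _ hZ
  have hA : #(A ∩ Mwants H) = ∑ Z ∈ Zc, #(Z.1 ∩ Mwants H) := by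
    rw [hsplit _ (inter_subset_left.trans (subset_totCov hC A))]
    refine sum_congr rfl fun Z hZ => ?_
    rw [inter_right_comm,
      inter_totCov_of_separated hC (hZA Z hZ) (separated_of_mem_isClique hclq hZ)]
  have hT : #(interf C A ∩ Mwants H) = ∑ Z ∈ Zc, #(interf C Z.1 ∩ Mwants H) := by
    rw [hsplit _ (inter_subset_left.trans (interf_subset_totCov A))]
    refine sum_congr rfl fun Z hZ => ?_
    rw [inter_right_comm,
      interf_inter_totCov_of_separated hC (hZA Z hZ) (separated_of_mem_isClique hclq hZ)]
  have hS : #(outRange C A ∩ Mwants H) + ∑ Z ∈ Zc, #(totCov C Z.1 ∩ Mwants H)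
      = #(Mwants H) := by
    rw [← card_sdiff_add_card_inter (Mwants H) (totCov C A), hsplit _ inter_subset_right,
      outRange_eq_compl_totCov, inter_comm, ← sdiff_eq_inter_compl]
    refine congrArg _ (sum_congr rfl fun Z hZ => ?_)
    rw [inter_assoc, inter_eq_right.2 (totCov_mono (hZA Z hZ)), inter_comm]
  rw [← hS]
  push_cast [hA, hT, sum_sub_distrib]
  ring

noncomputable def bestGain (C : V → Finset V) (H : V → Finset P) (p : V → V → ℝ)
    (A : Finset V) (i : V) : ℝ :=
  sSup {x : ℝ | ∃ κ ⊆ H i, x = ∑ j ∈ targeted C A H i κ, (1 - p i j)}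

noncomputable def bestJointObj (C : V → Finset V) (H : V → Finset P) (p : V → V → ℝ)
    (A : Finset V) : ℝ :=
  -((A ∩ Mwants H).card : ℝ) - ((interf C A ∩ Mwants H).card : ℝ)
    - ((outRange C A ∩ Mwants H).card : ℝ) + ∑ i ∈ A, bestGain C H p A i

lemma isGreatest_bestGain (C : V → Finset V) (H : V → Finset P) (p : V → V → ℝ)
    (A : Finset V) (i : V) :
    IsGreatest {x : ℝ | ∃ κ ⊆ H i, x = ∑ j ∈ targeted C A H i κ, (1 - p i j)}
      (bestGain C H p A i) :=
  Set.isGreatest_csSup_setOf_exists (q := (· ⊆ H i)) _ ⟨∅, empty_subset _⟩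

lemma jointObj_le_bestJointObj {H : V → Finset P} (p : V → V → ℝ) {A : Finset V}
    {κ : V → Finset P} (hκ : ∀ i ∈ A, κ i ⊆ H i) :
    jointObj C H p A κ ≤ bestJointObj C H p A :=
  add_le_add_right (sum_le_sum fun i hi => (isGreatest_bestGain C H p A i).2 ⟨κ i, hκ i hi, rfl⟩) _

lemma exists_jointObj_eq_bestJointObj (C : V → Finset V) (H : V → Finset P)
    (p : V → V → ℝ) (A : Finset V) :
    ∃ κ : V → Finset P, (∀ i ∈ A, κ i ⊆ H i) ∧ jointObj C H p A κ = bestJointObj C H p A := by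
  choose κ hκ hgain using fun i => (isGreatest_bestGain C H p A i).1
  exact ⟨κ, fun i _ => hκ i, by simp only [jointObj, bestJointObj, hgain]⟩

lemma bestJointObj_biUnion (hC : ∀ i, i ∈ C i) {Zc : Finset {Z : Finset V // IsCluster C Z}}
    (hclq : (fullCoopGraph C).IsClique ↑Zc) (H : V → Finset P) (p : V → V → ℝ) :
    bestJointObj C H p (Zc.biUnion Subtype.val)
      = -((Mwants H).card : ℝ) + ∑ Z ∈ Zc, wClust C H p Z.1 := by
  have hy : ∀ Z ∈ Zc, ∑ i ∈ Z.1, bestGain C H p (Zc.biUnion Subtype.val) i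
      = yClust C H p Z.1 := fun Z hZ => sum_congr rfl fun i hi => by
    simp only [bestGain, targeted_eq_tauZ_of_separated hC (subset_biUnion_of_mem _ hZ)
      (separated_of_mem_isClique hclq hZ) H hi]
  rw [bestJointObj, wantCounts_biUnion hC hclq H,
    sum_biUnion (pairwiseDisjoint_val_of_isClique hC hclq), sum_congr rfl hy]
  simp only [wClust, sum_add_distrib]
  ring

lemma jointObj_biUnion_le (hC : ∀ i, i ∈ C i) {Zc : Finset {Z : Finset V // IsCluster C Z}}
    (hclq : (fullCoopGraph C).IsClique ↑Zc) {H : V → Finset P} (p : V → V → ℝ)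
    {κ : V → Finset P} (hκ : ∀ i ∈ Zc.biUnion Subtype.val, κ i ⊆ H i) :
    jointObj C H p (Zc.biUnion Subtype.val) κ
      ≤ -((Mwants H).card : ℝ) + ∑ Z ∈ Zc, wClust C H p Z.1 :=
  bestJointObj_biUnion hC hclq H p ▸ jointObj_le_bestJointObj p hκ

lemma exists_jointObj_biUnion_eq (hC : ∀ i, i ∈ C i)
    {Zc : Finset {Z : Finset V // IsCluster C Z}} (hclq : (fullCoopGraph C).IsClique ↑Zc)
    (H : V → Finset P) (p : V → V → ℝ) :
    ∃ κ : V → Finset P, (∀ i ∈ Zc.biUnion Subtype.val, κ i ⊆ H i) ∧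
      jointObj C H p (Zc.biUnion Subtype.val) κ
        = -((Mwants H).card : ℝ) + ∑ Z ∈ Zc, wClust C H p Z.1 :=
  bestJointObj_biUnion hC hclq H p ▸ exists_jointObj_eq_bestJointObj C H p _

lemma exists_isClique_jointObj_le (hC : ∀ i, i ∈ C i) {H : V → Finset P} (p : V → V → ℝ)
    {A : Finset V} {κ : V → Finset P} (hκ : ∀ i ∈ A, κ i ⊆ H i) :
    ∃ Zc : Finset {Z : Finset V // IsCluster C Z}, (fullCoopGraph C).IsClique ↑Zc ∧
      jointObj C H p A κ ≤ -((Mwants H).card : ℝ) + ∑ Z ∈ Zc, wClust C H p Z.1 := by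
  obtain ⟨Zc, hclq, rfl⟩ := exists_isClique_biUnion_eq C A
  exact ⟨Zc, hclq, jointObj_biUnion_le hC hclq p hκ⟩

end Objective

theorem stmt13_general (C : V → Finset V) (hC : ∀ i, i ∈ C i) (H : V → Finset P)
    (p : V → V → ℝ) :
    -- the optimum of the joint problem equals `−|M_w|` plus the maximum clique weight
    (sSup {x : ℝ | ∃ (A : Finset V) (κ : V → Finset P),
        (∀ i ∈ A, κ i ⊆ H i) ∧ x = jointObj C H p A κ} =
      -((Mwants H).card : ℝ) + sSup {x : ℝ |
          ∃ Zc : Finset {Z : Finset V // IsCluster C Z},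
            (fullCoopGraph C).IsClique ↑Zc ∧ x = ∑ Z ∈ Zc, wClust C H p Z.1}) ∧
    -- moreover, `A*` attains the former maximum iff the unique clique with union `A*`
    -- attains the latter
    (∀ (Astar : Finset V) (Zstar : Finset {Z : Finset V // IsCluster C Z}),
      (fullCoopGraph C).IsClique ↑Zstar → Zstar.biUnion Subtype.val = Astar →
      ((∃ κ : V → Finset P, (∀ i ∈ Astar, κ i ⊆ H i) ∧
          ∀ (A : Finset V) (κ' : V → Finset P), (∀ i ∈ A, κ' i ⊆ H i) →
            jointObj C H p A κ' ≤ jointObj C H p Astar κ)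
        ↔ (∀ Zc : Finset {Z : Finset V // IsCluster C Z},
            (fullCoopGraph C).IsClique ↑Zc →
            ∑ Z ∈ Zc, wClust C H p Z.1 ≤ ∑ Z ∈ Zstar, wClust C H p Z.1))) := by
  obtain ⟨⟨Zm, hclqm, hsup⟩, hmax⟩ := Set.isGreatest_csSup_setOf_exists
    (q := fun Zc : Finset {Z : Finset V // IsCluster C Z} => (fullCoopGraph C).IsClique ↑Zc)
    (fun Zc => ∑ Z ∈ Zc, wClust C H p Z.1) ⟨∅, by simp⟩
  refine ⟨?_, fun Astar Zstar hclqs hunion => ?_⟩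
  · obtain ⟨κm, hκm, hκmeq⟩ := exists_jointObj_biUnion_eq hC hclqm H p
    rw [hsup]
    refine IsGreatest.csSup_eq ⟨⟨_, κm, hκm, hκmeq.symm⟩, ?_⟩
    rintro _ ⟨A, κ, hκ, rfl⟩
    obtain ⟨Zc, hclq, hle⟩ := exists_isClique_jointObj_le hC p hκ
    linarith [hsup ▸ hmax ⟨Zc, hclq, rfl⟩]
  · subst hunion
    constructor
    · rintro ⟨κ, hκ, hopt⟩ Zc hclq
      obtain ⟨κc, hκc, hκceq⟩ := exists_jointObj_biUnion_eq hC hclq H p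
      linarith [hopt _ κc hκc, jointObj_biUnion_le hC hclqs p hκ]
    · intro hmaxs
      obtain ⟨κs, hκs, hκseq⟩ := exists_jointObj_biUnion_eq hC hclqs H p
      refine ⟨κs, hκs, fun A κ hκ => ?_⟩
      obtain ⟨Zc, hclq, hle⟩ := exists_isClique_jointObj_le hC p hκ
      linarith [hmaxs Zc hclq]

theorem stmt13 (C : V → Finset V) (hC : ∀ i, i ∈ C i) (H : V → Finset P)
    (p : V → V → ℝ) (hp : ∀ i j, 0 ≤ p i j ∧ p i j ≤ 1) :
    -- the optimum of the joint problem equals `−|M_w|` plus the maximum clique weight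
    (sSup {x : ℝ | ∃ (A : Finset V) (κ : V → Finset P),
        (∀ i ∈ A, κ i ⊆ H i) ∧ x = jointObj C H p A κ} =
      -((Mwants H).card : ℝ) + sSup {x : ℝ |
          ∃ Zc : Finset {Z : Finset V // IsCluster C Z},
            (fullCoopGraph C).IsClique ↑Zc ∧ x = ∑ Z ∈ Zc, wClust C H p Z.1}) ∧
    -- moreover, `A*` attains the former maximum iff the unique clique with union `A*`
    -- attains the latter
    (∀ (Astar : Finset V) (Zstar : Finset {Z : Finset V // IsCluster C Z}),
      (fullCoopGraph C).IsClique ↑Zstar → Zstar.biUnion Subtype.val = Astar →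
      ((∃ κ : V → Finset P, (∀ i ∈ Astar, κ i ⊆ H i) ∧
          ∀ (A : Finset V) (κ' : V → Finset P), (∀ i ∈ A, κ' i ⊆ H i) →
            jointObj C H p A κ' ≤ jointObj C H p Astar κ)
        ↔ (∀ Zc : Finset {Z : Finset V // IsCluster C Z},
            (fullCoopGraph C).IsClique ↑Zc →
            ∑ Z ∈ Zc, wClust C H p Z.1 ≤ ∑ Z ∈ Zstar, wClust C H p Z.1))) :=
  stmt13_general C hC H p
end
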